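/- arXiv:1505.00597 — 2 statements merged into one kernel-verified Lean document; each statement's English description precedes it below -/
import Mathlib

section
/- Assume (Sld) holds for the nonlinear conditional expectation operator ℰ, with associated constant L > 1 and family 𝒬. Fix (σ,τ) ∈ 𝒯₂ and ξ, ξ' ∈ L^p(ℱ_τ). Then: (i) there exists ℚ ∈ 𝒬 such that ℰ_{σ,τ}[ξ] − ℰ_{σ,τ}[ξ'] ≤ E^ℚ[|ξ − ξ'| | ℱ_σ] a.s. (non-expansiveness); (ii) if ξ ≤ ξ' a.s., then ℰ_{σ,τ}[ξ] ≤ ℰ_{σ,τ}[ξ'] a.s. (monotonicity), and moreover ℰ_{σ,τ}[ξ] < ℰ_{σ,τ}[ξ'] a.s. on the event {ℙ[ξ < ξ' | ℱ_σ] > 0} (strict monotonicity). -/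
open MeasureTheory Filter Set Topology
open scoped ENNReal NNReal

noncomputable section

namespace BPT

variable {Ω : Type*} [m0 : MeasurableSpace Ω]

/-- `σ ∈ 𝒯` : a stopping time (for the filtration `ℱ`) a.s. valued in `[0, T]`. -/
def MemT (μ : Measure Ω) (ℱ : Filtration ℝ m0) (T : ℝ) (σ : Ω → ℝ) : Prop :=
  IsStoppingTime ℱ (fun ω => (σ ω : WithTop ℝ)) ∧ ∀ᵐ ω ∂μ, σ ω ∈ Set.Icc (0 : ℝ) T

/-- `(σ, τ) ∈ 𝒯₂` : σ ∈ 𝒯 and τ ∈ 𝒯_σ. -/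
def MemT2 (μ : Measure Ω) (ℱ : Filtration ℝ m0) (T : ℝ) (σ τ : Ω → ℝ) : Prop :=
  MemT μ ℱ T σ ∧ MemT μ ℱ T τ ∧ ∀ᵐ ω ∂μ, σ ω ≤ τ ω

/-- `ξ ∈ L^p(ℱ_τ)` : `ξ` is `ℱ_τ`-measurable and `p`-integrable. -/
def MemLpAt (μ : Measure Ω) (ℱ : Filtration ℝ m0) (p : ℝ≥0∞) (τ : Ω → ℝ) (ξ : Ω → ℝ) : Prop :=
  MemLp ξ p μ ∧ ∀ hτ : IsStoppingTime ℱ (fun ω => (τ ω : WithTop ℝ)), Measurable[hτ.measurableSpace] ξ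

/-- The negative part `ξ⁻` of a random variable. -/
def negPart (ξ : Ω → ℝ) : Ω → ℝ := fun ω => max (-(ξ ω)) 0

/-- The type of (nonlinear) conditional expectation operators `(σ, τ, ξ) ↦ ℰ_{σ,τ}[ξ]`. -/
abbrev NLEOp (Ω : Type*) : Type _ := (Ω → ℝ) → (Ω → ℝ) → (Ω → ℝ) → Ω → ℝ

/-- Assumption (Tc): time consistency. -/
def Tc (μ : Measure Ω) (ℱ : Filtration ℝ m0) (T : ℝ) (p : ℝ≥0∞) (E : NLEOp Ω) : Prop :=
  (∀ τ ξ, MemT μ ℱ T τ → MemLpAt μ ℱ p τ ξ → E τ τ ξ =ᵐ[μ] ξ) ∧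
  (∀ τ₁ τ₂ τ₃ ξ, MemT μ ℱ T τ₁ → MemT μ ℱ T τ₂ → MemT μ ℱ T τ₃ →
    (∀ᵐ ω ∂μ, τ₁ ω ≤ τ₂ ω) → (∀ᵐ ω ∂μ, τ₂ ω ≤ τ₃ ω) → MemLpAt μ ℱ p τ₃ ξ →
    E τ₁ τ₂ (E τ₂ τ₃ ξ) =ᵐ[μ] E τ₁ τ₃ ξ) ∧
  (∀ τ₁ τ₂ τ₃ ξ, MemT μ ℱ T τ₁ → MemT μ ℱ T τ₂ → MemT μ ℱ T τ₃ →
    (∀ᵐ ω ∂μ, max (τ₁ ω) (τ₂ ω) ≤ τ₃ ω) → MemLpAt μ ℱ p τ₃ ξ →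
    ∀ᵐ ω ∂μ, τ₁ ω = τ₂ ω → E τ₁ τ₃ ξ ω = E τ₂ τ₃ ξ ω)

/-- Assumption (S)(a). -/
def Sa (μ : Measure Ω) (ℱ : Filtration ℝ m0) (T : ℝ) (p : ℝ≥0∞) (E : NLEOp Ω) : Prop :=
  ∀ s : ℝ, s ∈ Set.Ico (0 : ℝ) T →
  ∀ sn : ℕ → ℝ, (∀ n, sn n ∈ Set.Icc s T) → Antitone sn → Tendsto sn atTop (𝓝 s) →
  ∀ ξ : Ω → ℝ, Measurable[ℱ s] ξ →
  ∀ ξn : ℕ → Ω → ℝ, (∀ n, MemLpAt μ ℱ p (fun _ => sn n) (ξn n)) →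
  (∃ C : ℝ≥0∞, C ≠ ⊤ ∧ ∀ n, eLpNorm (negPart (ξn n)) p μ ≤ C) →
  (∀ᵐ ω ∂μ, Tendsto (fun n => ξn n ω) atTop (𝓝 (ξ ω))) →
  ∀ᵐ ω ∂μ, ξ ω ≤ Filter.limsup (fun n => E (fun _ => s) (fun _ => sn n) (ξn n) ω) atTop

/-- Assumption (S)(b). -/
def Sb (μ : Measure Ω) (ℱ : Filtration ℝ m0) (T : ℝ) (p : ℝ≥0∞) (E : NLEOp Ω) : Prop :=
  ∀ σ τ : Ω → ℝ, ∀ σn : ℕ → Ω → ℝ, MemT μ ℱ T σ → MemT μ ℱ T τ →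
  (∀ n, MemT μ ℱ T (σn n)) →
  (∀ᵐ ω ∂μ, Antitone (fun n => σn n ω) ∧ Tendsto (fun n => σn n ω) atTop (𝓝 (σ ω)) ∧
    ∀ n, σn n ω ≤ τ ω) →
  ∀ ξ : Ω → ℝ, MemLpAt μ ℱ p τ ξ →
  ∀ᵐ ω ∂μ, E σ τ ξ ω ≤ Filter.limsup (fun n => E (σn n) τ ξ ω) atTop

/-- Assumption (S)(c). -/
def Sc (μ : Measure Ω) (ℱ : Filtration ℝ m0) (T : ℝ) (p : ℝ≥0∞) (E : NLEOp Ω) : Prop :=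
  ∀ σ τ : Ω → ℝ, MemT2 μ ℱ T σ τ →
  ∀ ξn : ℕ → Ω → ℝ, ∀ ξ : Ω → ℝ, (∀ n, MemLpAt μ ℱ p τ (ξn n)) → MemLp ξ p μ →
  (∀ᵐ ω ∂μ, Monotone (fun n => ξn n ω) ∧ Tendsto (fun n => ξn n ω) atTop (𝓝 (ξ ω))) →
  ∀ᵐ ω ∂μ, E σ τ ξ ω ≤ Filter.limsup (fun n => E σ τ (ξn n) ω) atTop

/-- Assumption (S). -/
def SAssumption (μ : Measure Ω) (ℱ : Filtration ℝ m0) (T : ℝ) (p : ℝ≥0∞) (E : NLEOp Ω) : Prop :=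
  Sa μ ℱ T p E ∧ Sb μ ℱ T p E ∧ Sc μ ℱ T p E

/-- Assumption (Sld), with constant `L > 1`, conjugate exponent `q` of `p`,
and family `𝒬` of equivalent probability measures. -/
def Sld (μ : Measure Ω) (ℱ : Filtration ℝ m0) (T : ℝ) (p q : ℝ≥0∞) (E : NLEOp Ω)
    (L : ℝ) (𝒬 : Set (Measure Ω)) : Prop :=
  (∀ Q ∈ 𝒬, IsProbabilityMeasure Q ∧ Q ≪ μ ∧ μ ≪ Q) ∧
  (∀ Q ∈ 𝒬, ∫⁻ ω, (Q.rnDeriv μ ω) ^ q.toReal + (Q.rnDeriv μ ω) ^ (1 - q.toReal) ∂μ ≤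
    ENNReal.ofReal L) ∧
  (∀ Q1 ∈ 𝒬, ∀ Q2 ∈ 𝒬, ∀ τ : Ω → ℝ, MemT μ ℱ T τ →
    ∀ hτ : IsStoppingTime ℱ (fun ω => (τ ω : WithTop ℝ)), ∃ M ∈ 𝒬, ∀ ξ : Ω → ℝ, Measurable ξ →
      (∃ C : ℝ, ∀ ω, |ξ ω| ≤ C) →
      ∫ ω, ξ ω ∂M = ∫ ω, (Q2[ξ | hτ.measurableSpace]) ω ∂Q1) ∧
  (∀ σ τ : Ω → ℝ, MemT2 μ ℱ T σ τ → ∀ ξ ξ' : Ω → ℝ,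
    MemLpAt μ ℱ p τ ξ → MemLpAt μ ℱ p τ ξ' →
    ∃ Q ∈ 𝒬, ∃ β : Ω → ℝ, Measurable β ∧ (∀ ω, β ω ∈ Set.Icc L⁻¹ 1) ∧
      ∀ hσ : IsStoppingTime ℱ (fun ω => (σ ω : WithTop ℝ)),
        ∀ᵐ ω ∂μ, E σ τ ξ ω ≤ E σ τ ξ' ω +
          (Q[fun ω' => β ω' * (ξ ω' - ξ' ω') | hσ.measurableSpace]) ω)

/-- `X` is an `ℰ`-supermartingale (in `X^p`). -/
def IsESupermartingale (μ : Measure Ω) (ℱ : Filtration ℝ m0) (T : ℝ) (p : ℝ≥0∞)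
    (E : NLEOp Ω) (X : ℝ → Ω → ℝ) : Prop :=
  ProgMeasurable ℱ X ∧
  (∀ τ : Ω → ℝ, MemT μ ℱ T τ → MemLpAt μ ℱ p τ (fun ω => X (τ ω) ω)) ∧
  ∀ σ τ : Ω → ℝ, MemT2 μ ℱ T σ τ →
    ∀ᵐ ω ∂μ, E σ τ (fun ω' => X (τ ω') ω') ω ≤ X (σ ω) ω

/-- `X` admits right limits `Xp t = X_{t+}` at every `t ∈ [0, T)` (the defining property of
membership in `X^p_r`, together with the supermartingale integrability). -/
def HasRightLim (T : ℝ) (X Xp : ℝ → Ω → ℝ) : Prop :=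
  ∀ ω, ∀ t ∈ Set.Ico (0 : ℝ) T, Tendsto (fun s => X s ω) (𝓝[>] t) (𝓝 (Xp t ω))

/-- The family `(X_t⁻)_{0 ≤ t ≤ T}` is bounded in `L^p`. -/
def NegPartBddLp (μ : Measure Ω) (p : ℝ≥0∞) (T : ℝ) (X : ℝ → Ω → ℝ) : Prop :=
  ∃ C : ℝ≥0∞, C ≠ ⊤ ∧ ∀ t ∈ Set.Icc (0 : ℝ) T, eLpNorm (negPart (X t)) p μ ≤ C

/-- The sum of the jumps on the right before time `t` :
`I_t(ω) = ∑_{0 ≤ s < t} (X_s(ω) - X_{s+}(ω))`. -/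
def jumpSum (X Xp : ℝ → Ω → ℝ) (t : ℝ) (ω : Ω) : ℝ :=
  ∑' s : Set.Ico (0 : ℝ) t, (X s.1 ω - Xp s.1 ω)


end BPT

/-! All three claims come from the (Sld) domination `ℰ[ξ] ≤ ℰ[ξ'] + E^ℚ[β (ξ - ξ') | ℱ_σ]`,
whose last term makes sense because `dℚ/dℙ ∈ L^q` puts `L^p(ℙ)` inside `L^1(ℚ)`.
For strictness, `β (ξ' - ξ) ≥ 0` vanishes ℚ-a.s. on the `ℱ_σ`-measurable set where its
`ℚ`-conditional expectation does, hence ℙ-a.s. there since `ℙ ≪ ℚ`, and then so does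
`ℙ[ξ < ξ' | ℱ_σ]`. -/

namespace MeasureTheory

variable {Ω : Type*} {m m0 : MeasurableSpace Ω} {μ Q : Measure Ω} {f k : Ω → ℝ}

theorem ae_eq_zero_of_condExp_nonpos (hm : m ≤ m0) [SigmaFinite (μ.trim hm)]
    (hk0 : 0 ≤ᵐ[μ] k) (hk : Integrable k μ) : ∀ᵐ ω ∂μ, μ[k|m] ω ≤ 0 → k ω = 0 := by
  set A := {ω | μ[k|m] ω ≤ 0}
  have hAm : MeasurableSet[m] A :=
    measurableSet_le stronglyMeasurable_condExp.measurable measurable_const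
  have hA : MeasurableSet A := hm _ hAm
  have hint : ∫ ω in A, k ω ∂μ = 0 := by
    refine le_antisymm ?_ (setIntegral_nonneg_of_ae hk0)
    rw [← setIntegral_condExp hm hk hAm]
    exact setIntegral_nonpos hA fun ω hω => hω
  have := (setIntegral_eq_zero_iff_of_nonneg_ae (ae_restrict_of_ae hk0) hk.integrableOn).1 hint
  exact (ae_restrict_iff' hA).1 this

theorem condExp_eq_zero_of_ae_eq_zero_on {s : Set Ω} (hs : MeasurableSet[m] s)
    (hf : ∀ᵐ ω ∂μ, ω ∈ s → f ω = 0) : ∀ᵐ ω ∂μ, ω ∈ s → μ[f|m] ω = 0 := by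
  by_cases hfi : Integrable f μ
  swap
  · simp [condExp_of_not_integrable hfi]
  have hind : s.indicator f =ᵐ[μ] 0 := by
    filter_upwards [hf] with ω hω
    by_cases h : ω ∈ s <;> simp [h, hω]
  filter_upwards [condExp_indicator hfi hs, condExp_congr_ae (m := m) hind] with ω h₁ h₂ hω
  rw [← Set.indicator_of_mem hω (μ[f|m]), ← h₁, h₂, condExp_zero, Pi.zero_apply]

theorem ae_condExp_pos_of_condExp_ne_zero (hμQ : μ ≪ Q) (hm : m ≤ m0) [SigmaFinite (Q.trim hm)]
    (hk0 : 0 ≤ᵐ[Q] k) (hk : Integrable k Q) (hfk : ∀ᵐ ω ∂μ, k ω = 0 → f ω = 0) :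
    ∀ᵐ ω ∂μ, μ[f|m] ω ≠ 0 → 0 < Q[k|m] ω := by
  have hAm : MeasurableSet[m] {ω | Q[k|m] ω ≤ 0} :=
    measurableSet_le stronglyMeasurable_condExp.measurable measurable_const
  have hfA : ∀ᵐ ω ∂μ, ω ∈ {ω | Q[k|m] ω ≤ 0} → f ω = 0 := by
    filter_upwards [hμQ.ae_le (ae_eq_zero_of_condExp_nonpos hm hk0 hk), hfk] with ω h₁ h₂ hω
    exact h₂ (h₁ hω)
  filter_upwards [condExp_eq_zero_of_ae_eq_zero_on hAm hfA] with ω h hne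
  exact not_le.1 fun hω => hne (h hω)

theorem memLp_toReal_rnDeriv [SigmaFinite Q] {q : ℝ≥0∞} (hq0 : q ≠ 0)
    (hq : q ≠ ∞) (h : ∫⁻ ω, Q.rnDeriv μ ω ^ q.toReal ∂μ ≠ ∞) :
    MemLp (fun ω => (Q.rnDeriv μ ω).toReal) q μ := by
  refine ⟨(Measure.measurable_rnDeriv Q μ).ennreal_toReal.aestronglyMeasurable, ?_⟩
  rw [eLpNorm_lt_top_iff_lintegral_rpow_enorm_lt_top hq0 hq, lt_top_iff_ne_top]
  convert h using 1
  refine lintegral_congr_ae ?_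
  filter_upwards [Measure.rnDeriv_lt_top Q μ] with ω hω
  rw [Real.enorm_toReal hω.ne]

end MeasureTheory

namespace BPT

variable {Ω : Type*} [m0 : MeasurableSpace Ω]

theorem Sld.integrable {μ : Measure Ω} [SigmaFinite μ] {ℱ : Filtration ℝ m0} {T : ℝ} {p q : ℝ≥0∞}
    {E : NLEOp Ω} {L : ℝ} {𝒬 : Set (Measure Ω)} (hSld : Sld μ ℱ T p q E L 𝒬)
    (hp : 1 < p) (hpq : p⁻¹ + q⁻¹ = 1) {Q : Measure Ω} (hQ : Q ∈ 𝒬) {f : Ω → ℝ}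
    (hf : MemLp f p μ) : Integrable f Q := by
  have : p.HolderConjugate q := ENNReal.holderConjugate_iff.2 hpq
  obtain ⟨hQprob, hQμ, -⟩ := hSld.1 Q hQ
  have hD : ∫⁻ ω, Q.rnDeriv μ ω ^ q.toReal ∂μ ≠ ∞ :=
    ((lintegral_mono fun ω => le_self_add).trans (hSld.2.1 Q hQ)).trans_lt
      ENNReal.ofReal_lt_top |>.ne
  have hDq := memLp_toReal_rnDeriv (ENNReal.HolderConjugate.ne_zero q p)
    ((ENNReal.HolderConjugate.lt_top_iff_one_lt q p).2 hp).ne hD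
  exact (integrable_toReal_rnDeriv_mul_iff hQμ).1 (hDq.integrable_mul hf)

theorem nonexpansive_and_strictly_monotone_general
    (μ : Measure Ω) [IsProbabilityMeasure μ] (ℱ : Filtration ℝ m0)
    (T : ℝ) (p q : ℝ≥0∞) (hp : 1 < p) (hpq : p⁻¹ + q⁻¹ = 1)
    (E : NLEOp Ω) (L : ℝ) (hL : 1 < L) (𝒬 : Set (Measure Ω))
    (hSld : Sld μ ℱ T p q E L 𝒬)
    (σ τ : Ω → ℝ) (hστ : MemT2 μ ℱ T σ τ)
    (hσ : IsStoppingTime ℱ (fun ω => (σ ω : WithTop ℝ)))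
    (ξ ξ' : Ω → ℝ) (hξ : MemLpAt μ ℱ p τ ξ) (hξ' : MemLpAt μ ℱ p τ ξ') :
    -- (i) non-expansiveness
    (∃ Q ∈ 𝒬,
      ∀ᵐ ω ∂μ, E σ τ ξ ω - E σ τ ξ' ω ≤
        (Q[fun ω' => |ξ ω' - ξ' ω'| | hσ.measurableSpace]) ω) ∧
    -- (ii) monotonicity and strict monotonicity
    ((∀ᵐ ω ∂μ, ξ ω ≤ ξ' ω) →
      (∀ᵐ ω ∂μ, E σ τ ξ ω ≤ E σ τ ξ' ω) ∧
      (∀ᵐ ω ∂μ,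
        0 < (μ[Set.indicator {ω' | ξ ω' < ξ' ω'} (fun _ => (1 : ℝ)) | hσ.measurableSpace]) ω →
        E σ τ ξ ω < E σ τ ξ' ω)) := by
  obtain ⟨Q, hQ, β, hβm, hβL, hE⟩ := hSld.2.2.2 σ τ hστ ξ ξ' hξ hξ'
  obtain ⟨hQprob, hQμ, hμQ⟩ := hSld.1 Q hQ
  have hβ : ∀ ω, 0 < β ω ∧ β ω ≤ 1 := fun ω =>
    ⟨(inv_pos.2 (zero_lt_one.trans hL)).trans_le (hβL ω).1, (hβL ω).2⟩
  have hdiff : Integrable (fun ω => ξ ω - ξ' ω) Q := hSld.integrable hp hpq hQ (hξ.1.sub hξ'.1)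
  have hint : Integrable (fun ω => β ω * (ξ ω - ξ' ω)) Q :=
    hdiff.bdd_mul (c := 1) hβm.aestronglyMeasurable
      (ae_of_all _ fun ω => by simp [abs_of_pos (hβ ω).1, (hβ ω).2])
  have hβabs : ∀ ω, β ω * (ξ ω - ξ' ω) ≤ |ξ ω - ξ' ω| := fun ω =>
    (mul_le_mul_of_nonneg_left (le_abs_self _) (hβ ω).1.le).trans
      (mul_le_of_le_one_left (abs_nonneg _) (hβ ω).2)
  refine ⟨⟨Q, hQ, ?_⟩, fun hle => ⟨?_, ?_⟩⟩
  · have hmono := condExp_mono (m := hσ.measurableSpace) hint hdiff.abs (ae_of_all _ hβabs)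
    filter_upwards [hE hσ, hμQ.ae_le hmono] with ω h₁ h₂
    linarith
  · have hnonpos := condExp_nonpos (m := hσ.measurableSpace) (hQμ.ae_le (hle.mono fun ω hω =>
      mul_nonpos_of_nonneg_of_nonpos (hβ ω).1.le (sub_nonpos.2 hω)))
    filter_upwards [hE hσ, hμQ.ae_le hnonpos] with ω h₁ h₂
    rw [Pi.zero_apply] at h₂
    linarith
  · set k : Ω → ℝ := fun ω => β ω * (ξ' ω - ξ ω)
    have hk : (fun ω => β ω * (ξ ω - ξ' ω)) = -k := by
      funext ω; simp only [k, Pi.neg_apply]; ring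
    rw [hk] at hint hE
    have hpos := ae_condExp_pos_of_condExp_ne_zero hμQ hσ.measurableSpace_le
      (f := Set.indicator {ω' | ξ ω' < ξ' ω'} fun _ => (1 : ℝ))
      (hQμ.ae_le (hle.mono fun ω hω => mul_nonneg (hβ ω).1.le (sub_nonneg.2 hω)))
      (by simpa using hint.neg)
      (ae_of_all _ fun ω h => Set.indicator_of_notMem (show ω ∉ {ω' | ξ ω' < ξ' ω'} from
        not_lt.2 (sub_eq_zero.1 ((mul_eq_zero.1 h).resolve_left (hβ ω).1.ne')).le) _)
    filter_upwards [hE hσ, hμQ.ae_le (condExp_neg k _), hpos] with ω h₁ h₂ h₃ hω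
    rw [h₂, Pi.neg_apply] at h₁
    linarith [h₃ hω.ne']

/-- under (Sld), the operator `ℰ` is non-expansive and (strictly) monotone:
(i) `ℰ_{σ,τ}[ξ] - ℰ_{σ,τ}[ξ'] ≤ 𝔼^ℚ[|ξ - ξ'| | ℱ_σ]` a.s. for some `ℚ ∈ 𝒬`;
(ii) if `ξ ≤ ξ'` a.s. then `ℰ_{σ,τ}[ξ] ≤ ℰ_{σ,τ}[ξ']` a.s., with strict inequality a.s. on
`{ℙ[ξ < ξ' | ℱ_σ] > 0}`. -/
theorem nonexpansive_and_strictly_monotone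
    (μ : Measure Ω) [IsProbabilityMeasure μ] (ℱ : Filtration ℝ m0)
    (T : ℝ) (hT : 0 < T) (p q : ℝ≥0∞) (hp : 1 < p) (hpq : p⁻¹ + q⁻¹ = 1)
    (E : NLEOp Ω) (L : ℝ) (hL : 1 < L) (𝒬 : Set (Measure Ω))
    (hSld : Sld μ ℱ T p q E L 𝒬)
    (σ τ : Ω → ℝ) (hστ : MemT2 μ ℱ T σ τ)
    (hσ : IsStoppingTime ℱ (fun ω => (σ ω : WithTop ℝ)))
    (ξ ξ' : Ω → ℝ) (hξ : MemLpAt μ ℱ p τ ξ) (hξ' : MemLpAt μ ℱ p τ ξ') :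
    -- (i) non-expansiveness
    (∃ Q ∈ 𝒬,
      ∀ᵐ ω ∂μ, E σ τ ξ ω - E σ τ ξ' ω ≤
        (Q[fun ω' => |ξ ω' - ξ' ω'| | hσ.measurableSpace]) ω) ∧
    -- (ii) monotonicity and strict monotonicity
    ((∀ᵐ ω ∂μ, ξ ω ≤ ξ' ω) →
      (∀ᵐ ω ∂μ, E σ τ ξ ω ≤ E σ τ ξ' ω) ∧
      (∀ᵐ ω ∂μ,
        0 < (μ[Set.indicator {ω' | ξ ω' < ξ' ω'} (fun _ => (1 : ℝ)) | hσ.measurableSpace]) ω →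
        E σ τ ξ ω < E σ τ ξ' ω)) :=
  nonexpansive_and_strictly_monotone_general μ ℱ T p q hp hpq E L hL 𝒬 hSld σ τ hστ hσ ξ ξ' hξ hξ'

end BPT
end
end

section
/- Let T > 0 and let f : [0,T] → ℝ admit a right limit f(t+) := lim_{s↓t} f(s) at every t ∈ [0,T), with f(t) ≥ f(t+) for every t ∈ [0,T). Assume the total right-jump sum ∑_{s ∈ [0,T)} (f(s) − f(s+)), a (possibly uncountable) sum of nonnegative terms, is finite. Define I(t) := ∑_{s < t} (f(s) − f(s+)) for t ∈ [0,T]. Then: (i) I is nondecreasing on [0,T]; (ii) I is left-continuous on (0,T]; and (iii) the function f + I is right-continuous on [0,T), i.e. (f+I)(t+) = f(t) + I(t) for every t ∈ [0,T). -/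
/-!
Extend the jump sizes `f - fp` by zero outside `[0,T)` to a summable nonnegative function `g`
on `ℝ`, so that `I(t) = ∑_{x<t} g x`. As `s ↑ t` (resp. `s ↓ t`) the indicators of `Iio s`
converge pointwise to that of `Iio t` (resp. `Iic t`), dominated by `|g|`, so Tannery's theorem
gives `I(t-) = I(t)` and `I(t+) = I(t) + g t`. The extra term `g t = f t - f(t+)` is exactly the
jump of `f` at `t`, which it cancels in `f + I`.
-/

open Filter Set Topology

noncomputable section

namespace BPT11

/-- `I(t) = ∑_{0 ≤ s < t} (f(s) - f(s+))`, the sum of the right-jumps of `f` before `t`,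
where `fp s = f(s+)` is the right limit of `f` at `s`. -/
def jumpSum (f fp : ℝ → ℝ) (t : ℝ) : ℝ :=
  ∑' s : Set.Ico (0 : ℝ) t, (f s.1 - fp s.1)

theorem tendsto_tsum_indicator {ι α E : Type*} [NormedAddCommGroup E] [CompleteSpace E]
    {l : Filter ι} {g : α → E} (hg : Summable (‖g ·‖)) {s : ι → Set α} {S : Set α}
    (hs : ∀ x, ∀ᶠ i in l, x ∈ s i ↔ x ∈ S) :
    Tendsto (fun i => ∑' x, (s i).indicator g x) l (𝓝 (∑' x, S.indicator g x)) := by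
  refine tendsto_tsum_of_dominated_convergence hg (fun x => ?_)
    (Eventually.of_forall fun i x => norm_indicator_le_norm_self g x)
  exact tendsto_const_nhds.congr' ((hs x).mono fun i hi => indicator_eq_indicator hi.symm rfl)

section SumBelow

variable {α E : Type*} [LinearOrder α]

def sumBelow [AddCommMonoid E] [TopologicalSpace E] (g : α → E) (t : α) : E :=
  ∑' x, (Iio t).indicator g x

theorem monotone_sumBelow {g : α → ℝ} (hg : Summable g) (hg0 : 0 ≤ g) :
    Monotone (sumBelow g) := fun _ _ hab =>
  hg.indicator _ |>.tsum_le_tsum (fun x => indicator_le_indicator_of_subset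
    (Iio_subset_Iio hab) hg0 x) (hg.indicator _)

variable [NormedAddCommGroup E] [CompleteSpace E] {g : α → E}

theorem tsum_indicator_Iic (hg : Summable (‖g ·‖)) (t : α) :
    ∑' x, (Iic t).indicator g x = sumBelow g t + g t := by
  classical
  rw [(hg.of_norm.indicator _).tsum_eq_add_tsum_ite t, add_comm, sumBelow]
  congr 1
  · exact tsum_congr fun x => by
      rcases lt_trichotomy x t with h | rfl | h
      · simp [h, h.ne, h.le]
      · simp
      · simp [h.ne', h.not_ge, h.not_gt]
  · simp

variable [TopologicalSpace α] [OrderTopology α]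

theorem tendsto_sumBelow_nhdsLT (hg : Summable (‖g ·‖)) (t : α) :
    Tendsto (sumBelow g) (𝓝[<] t) (𝓝 (sumBelow g t)) := by
  refine tendsto_tsum_indicator hg fun x => ?_
  rcases lt_or_ge x t with hxt | htx
  · filter_upwards [Ioo_mem_nhdsLT hxt] with s hs
    simp [hs.1, hxt]
  · filter_upwards [self_mem_nhdsWithin] with s (hs : s < t)
    simp [htx.not_gt, (hs.trans_le htx).not_gt]

theorem tendsto_sumBelow_nhdsGT (hg : Summable (‖g ·‖)) (t : α) :
    Tendsto (sumBelow g) (𝓝[>] t) (𝓝 (sumBelow g t + g t)) := by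
  rw [← tsum_indicator_Iic hg]
  refine tendsto_tsum_indicator hg fun x => ?_
  rcases le_or_gt x t with hxt | htx
  · filter_upwards [self_mem_nhdsWithin] with s (hs : t < s)
    simp [hxt, hxt.trans_lt hs]
  · filter_upwards [Ioo_mem_nhdsGT htx] with s hs
    simp [htx.not_ge, hs.2.le.not_gt]

end SumBelow

theorem jumpSum_eq_sumBelow {f fp : ℝ → ℝ} {T t : ℝ} (ht : t ≤ T) :
    jumpSum f fp t = sumBelow ((Ico 0 T).indicator (f - fp)) t := by
  rw [jumpSum, sumBelow, indicator_indicator, inter_comm, Ico_inter_Iio, min_eq_right ht]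
  exact tsum_subtype (Ico 0 t) (f - fp)

theorem deterministic_mertens_general
    (T : ℝ) (f fp : ℝ → ℝ)
    (hright : ∀ t ∈ Set.Ico (0 : ℝ) T, Tendsto f (𝓝[>] t) (𝓝 (fp t)))
    (hjump : ∀ t ∈ Set.Ico (0 : ℝ) T, fp t ≤ f t)
    (hfin : ∃ M : ℝ, ∀ F : Finset (Set.Ico (0 : ℝ) T), ∑ s ∈ F, (f s.1 - fp s.1) ≤ M) :
    -- (i) `I` is nondecreasing on `[0,T]`
    MonotoneOn (jumpSum f fp) (Set.Icc 0 T) ∧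
    -- (ii) `I` is left-continuous on `(0,T]`
    (∀ t ∈ Set.Ioc (0 : ℝ) T, Tendsto (jumpSum f fp) (𝓝[<] t) (𝓝 (jumpSum f fp t))) ∧
    -- (iii) `f + I` is right-continuous on `[0,T)`: `(f+I)(t+) = f(t) + I(t)`
    (∀ t ∈ Set.Ico (0 : ℝ) T,
      Tendsto (fun s => f s + jumpSum f fp s) (𝓝[>] t) (𝓝 (f t + jumpSum f fp t))) := by
  obtain ⟨M, hM⟩ := hfin
  set g := (Ico (0 : ℝ) T).indicator (f - fp)
  have hg0 : 0 ≤ g := indicator_nonneg fun t ht => sub_nonneg.2 (hjump t ht)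
  have hg : Summable g := summable_subtype_iff_indicator.mp <|
    summable_of_sum_le (fun s => sub_nonneg.2 (hjump s.1 s.2)) hM
  have hI : ∀ t ≤ T, jumpSum f fp t = sumBelow g t := fun t => jumpSum_eq_sumBelow
  refine ⟨fun a ha b hb hab => ?_, fun t ht => ?_, fun t ht => ?_⟩
  · rw [hI a ha.2, hI b hb.2]
    exact monotone_sumBelow hg hg0 hab
  · rw [hI t ht.2]
    refine (tendsto_sumBelow_nhdsLT hg.norm t).congr' ?_
    filter_upwards [self_mem_nhdsWithin] with s (hs : s < t) using (hI s (hs.le.trans ht.2)).symm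
  · have hIt : Tendsto (jumpSum f fp) (𝓝[>] t) (𝓝 (sumBelow g t + g t)) :=
      (tendsto_sumBelow_nhdsGT hg.norm t).congr' <| by
        filter_upwards [Ioo_mem_nhdsGT ht.2] with s hs using (hI s hs.2.le).symm
    have hgt : g t = f t - fp t := indicator_of_mem ht (f - fp)
    convert (hright t ht).add hIt using 2
    rw [hI t ht.2.le, hgt]
    ring

/-- deterministic Mertens regularization: if `f : [0,T] → ℝ` admits right
limits `f(t+) = fp t` at every `t ∈ [0,T)`, with `f(t) ≥ f(t+)` there, and the total right-jump
sum (a sum of nonnegative terms over the uncountable index set `[0,T)`, i.e. the supremum of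
its finite partial sums) is finite, then `I(t) = ∑_{s<t} (f(s) - f(s+))` is nondecreasing on
`[0,T]`, left-continuous on `(0,T]`, and `f + I` is right-continuous on `[0,T)`. -/
theorem deterministic_mertens
    (T : ℝ) (hT : 0 < T) (f fp : ℝ → ℝ)
    (hright : ∀ t ∈ Set.Ico (0 : ℝ) T, Tendsto f (𝓝[>] t) (𝓝 (fp t)))
    (hjump : ∀ t ∈ Set.Ico (0 : ℝ) T, fp t ≤ f t)
    (hfin : ∃ M : ℝ, ∀ F : Finset (Set.Ico (0 : ℝ) T), ∑ s ∈ F, (f s.1 - fp s.1) ≤ M) :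
    -- (i) `I` is nondecreasing on `[0,T]`
    MonotoneOn (jumpSum f fp) (Set.Icc 0 T) ∧
    -- (ii) `I` is left-continuous on `(0,T]`
    (∀ t ∈ Set.Ioc (0 : ℝ) T, Tendsto (jumpSum f fp) (𝓝[<] t) (𝓝 (jumpSum f fp t))) ∧
    -- (iii) `f + I` is right-continuous on `[0,T)`: `(f+I)(t+) = f(t) + I(t)`
    (∀ t ∈ Set.Ico (0 : ℝ) T,
      Tendsto (fun s => f s + jumpSum f fp s) (𝓝[>] t) (𝓝 (f t + jumpSum f fp t))) :=
  deterministic_mertens_general T f fp hright hjump hfin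

end BPT11
end
end
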